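/- arXiv:2406.08883 — 8 statements merged into one kernel-verified Lean document; each statement's English description precedes it below -/
import Mathlib

section
/- For all nonzero complex numbers z1 and z2, one has |z1 + z2| ≥ (|z1| + |z2|) · |cos((arg(z1) − arg(z2)) / 2)|. -/
/-!
By the law of cosines, `‖z₁ + z₂‖² = r₁² + r₂² + 2 r₁ r₂ cos φ` with `rᵢ = ‖zᵢ‖` and
`φ = arg z₁ - arg z₂`, while `(r₁ + r₂)² cos² (φ / 2) = (r₁ + r₂)² (1 + cos φ) / 2`.
The difference of the two is `(r₁ - r₂)² (1 - cos φ) / 2 ≥ 0`.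
-/

open Complex Real ComplexConjugate

lemma Complex.re_mul_conj_eq_norm_mul_norm_mul_cos_arg_sub (z w : ℂ) :
    (z * conj w).re = ‖z‖ * ‖w‖ * Real.cos (arg z - arg w) := by
  rw [Real.cos_sub]
  simp only [mul_re, conj_re, conj_im, ← norm_mul_cos_arg z, ← norm_mul_cos_arg w,
    ← norm_mul_sin_arg z, ← norm_mul_sin_arg w]
  ring

lemma Complex.sq_norm_add_eq_law_of_cosines (z w : ℂ) :
    ‖z + w‖ ^ 2 = ‖z‖ ^ 2 + ‖w‖ ^ 2 + 2 * ‖z‖ * ‖w‖ * Real.cos (arg z - arg w) := by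
  simp only [Complex.sq_norm, normSq_add, re_mul_conj_eq_norm_mul_norm_mul_cos_arg_sub]
  ring

lemma Real.sq_add_mul_cos_half_le (a b φ : ℝ) :
    ((a + b) * Real.cos (φ / 2)) ^ 2 ≤ a ^ 2 + b ^ 2 + 2 * a * b * Real.cos φ := by
  have hcos : Real.cos (φ / 2) ^ 2 = 1 / 2 + Real.cos φ / 2 := by
    rw [cos_sq, mul_div_cancel₀ φ two_ne_zero]
  have hgap : a ^ 2 + b ^ 2 + 2 * a * b * Real.cos φ - ((a + b) * Real.cos (φ / 2)) ^ 2
      = (a - b) ^ 2 * (1 - Real.cos φ) / 2 := by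
    rw [mul_pow, hcos]; ring
  have hgap_nonneg : 0 ≤ (a - b) ^ 2 * (1 - Real.cos φ) / 2 := by
    have := sub_nonneg.mpr (cos_le_one φ)
    positivity
  linarith

theorem abs_add_ge_cos_half_arg_sub_general (z₁ z₂ : ℂ) :
    ‖z₁ + z₂‖ ≥ (‖z₁‖ + ‖z₂‖) *
      |Real.cos ((Complex.arg z₁ - Complex.arg z₂) / 2)| := by
  have hsq : ((‖z₁‖ + ‖z₂‖) * Real.cos ((arg z₁ - arg z₂) / 2)) ^ 2 ≤ ‖z₁ + z₂‖ ^ 2 := by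
    rw [sq_norm_add_eq_law_of_cosines]
    exact sq_add_mul_cos_half_le _ _ _
  have habs := sq_le_sq.mp hsq
  rwa [abs_mul, abs_of_nonneg (by positivity : 0 ≤ ‖z₁‖ + ‖z₂‖), abs_norm] at habs

theorem abs_add_ge_cos_half_arg_sub (z₁ z₂ : ℂ) (h₁ : z₁ ≠ 0) (h₂ : z₂ ≠ 0) :
    ‖z₁ + z₂‖ ≥ (‖z₁‖ + ‖z₂‖) *
      |Real.cos ((Complex.arg z₁ - Complex.arg z₂) / 2)| :=
  abs_add_ge_cos_half_arg_sub_general z₁ z₂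
end

section
/- Let 0 < α < π/2 and let z be a complex number with z ≠ 0 and |arg(z)| < α. Then |1 + e^{−z}| ≥ 1 − e^{−π/(2·tan(α))}. -/
/-!
If `Re z ≥ π / (2 tan α)`, the triangle inequality gives `‖1 + e^{-z}‖ ≥ 1 - e^{-Re z}`, which is
already the bound. Otherwise the sector condition `|Im z| ≤ tan α · Re z` forces `|Im z| ≤ π / 2`,
so `e^{-z}` has nonnegative real part and `‖1 + e^{-z}‖ ≥ Re (1 + e^{-z}) ≥ 1`.
-/

open Complex Real

theorem Real.sin_le_tan_mul_cos {θ α : ℝ} (hθ : -(π / 2) < θ) (hθα : θ ≤ α) (hα : α < π / 2) :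
    Real.sin θ ≤ Real.tan α * Real.cos θ := by
  have hcos : 0 < Real.cos θ := Real.cos_pos_of_mem_Ioo ⟨hθ, hθα.trans_lt hα⟩
  have htan : Real.tan θ ≤ Real.tan α :=
    Real.strictMonoOn_tan.le_iff_le ⟨hθ, hθα.trans_lt hα⟩ ⟨hθ.trans_le hθα, hα⟩ |>.2 hθα
  calc Real.sin θ = Real.tan θ * Real.cos θ := by
        rw [Real.tan_eq_sin_div_cos, div_mul_cancel₀ _ hcos.ne']
    _ ≤ Real.tan α * Real.cos θ := by gcongr

theorem Real.abs_sin_le_tan_mul_cos {θ α : ℝ} (hθα : |θ| ≤ α) (hα : α < π / 2) :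
    |Real.sin θ| ≤ Real.tan α * Real.cos θ := by
  obtain ⟨hθ_lower, hθ_upper⟩ := abs_le.1 hθα
  refine abs_le.2 ⟨?_, Real.sin_le_tan_mul_cos (by linarith) hθ_upper hα⟩
  have := Real.sin_le_tan_mul_cos (θ := -θ) (by linarith) (by linarith) hα
  rw [Real.sin_neg, Real.cos_neg] at this
  linarith

theorem Complex.abs_im_le_tan_mul_re {z : ℂ} {α : ℝ} (harg : |arg z| ≤ α) (hα : α < π / 2) :
    |z.im| ≤ Real.tan α * z.re := by
  rw [← norm_mul_sin_arg, ← norm_mul_cos_arg, abs_mul, abs_norm, mul_left_comm]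
  exact mul_le_mul_of_nonneg_left (Real.abs_sin_le_tan_mul_cos harg hα) (norm_nonneg z)

theorem Complex.one_sub_exp_neg_re_le_norm_one_add_exp_neg (z : ℂ) :
    1 - Real.exp (-z.re) ≤ ‖1 + exp (-z)‖ := by
  simpa [norm_exp] using norm_sub_norm_le (1 : ℂ) (-exp (-z))

theorem Complex.one_le_norm_one_add_exp_neg {z : ℂ} (him : |z.im| ≤ π / 2) :
    1 ≤ ‖1 + exp (-z)‖ := by
  have hcos : 0 ≤ Real.cos z.im := Real.cos_nonneg_of_neg_pi_div_two_le_of_le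
    (abs_le.1 him).1 (abs_le.1 him).2
  calc (1 : ℝ) ≤ 1 + Real.exp (-z.re) * Real.cos z.im :=
        le_add_of_nonneg_right (mul_nonneg (Real.exp_pos _).le hcos)
    _ = (1 + exp (-z)).re := by simp [exp_re]
    _ ≤ ‖1 + exp (-z)‖ := re_le_norm _

theorem abs_one_add_exp_neg_ge_general (α : ℝ) (hα' : α < Real.pi / 2)
    (z : ℂ) (harg : |Complex.arg z| < α) :
    ‖1 + Complex.exp (-z)‖ ≥ 1 - Real.exp (-Real.pi / (2 * Real.tan α)) := by
  have htan : 0 < Real.tan α :=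
    Real.tan_pos_of_pos_of_lt_pi_div_two ((abs_nonneg _).trans_lt harg) hα'
  rw [neg_div, ge_iff_le]
  rcases le_or_gt (π / (2 * Real.tan α)) z.re with hre | hre
  · calc 1 - Real.exp (-(π / (2 * Real.tan α))) ≤ 1 - Real.exp (-z.re) := by gcongr
      _ ≤ ‖1 + exp (-z)‖ := one_sub_exp_neg_re_le_norm_one_add_exp_neg z
  · have him : |z.im| ≤ π / 2 := calc
      |z.im| ≤ Real.tan α * z.re := abs_im_le_tan_mul_re harg.le hα'
      _ ≤ Real.tan α * (π / (2 * Real.tan α)) := by gcongr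
      _ = π / 2 := by field_simp
    linarith [one_le_norm_one_add_exp_neg him, Real.exp_pos (-(π / (2 * Real.tan α)))]

theorem abs_one_add_exp_neg_ge (α : ℝ) (hα : 0 < α) (hα' : α < Real.pi / 2)
    (z : ℂ) (hz : z ≠ 0) (harg : |Complex.arg z| < α) :
    ‖1 + Complex.exp (-z)‖ ≥ 1 - Real.exp (-Real.pi / (2 * Real.tan α)) :=
  abs_one_add_exp_neg_ge_general α hα' z harg
end

section
/- Let 0 < α < π/2 and let z be a nonzero complex number with |arg(z)| < α. Then (|z|·cos(α))/(1 + |z|·cos(α)) ≤ |1 − e^{−z}| ≤ 2|z|/(1 + |z|·cos(α)). -/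
/-! Write `x = Re z`, `y = Im z` and `u = e^{-x}`. In the sector, `‖z‖ cos α ≤ x`, so it suffices to
bound `‖1 - e^{-z}‖` below by `x / (1 + x)` and above by `2‖z‖ / (1 + x)`. The lower bound is the
reverse triangle inequality `1 - u ≤ ‖1 - e^{-z}‖` together with `1 + x ≤ e^x`. For the upper bound,
`‖1 - e^{-z}‖² = (1 - u)² + 2u(1 - cos y)`, and the elementary estimates `(1 - u)(1 + x) ≤ 2x`,
`u(1 + x)² ≤ 4` and `2(1 - cos y) ≤ y²` give `‖1 - e^{-z}‖² (1 + x)² ≤ 4x² + 4y² = 4‖z‖²`. -/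
open Complex Real

namespace Real

lemma div_one_add_le_one_sub_exp_neg {x : ℝ} (hx : -1 < x) : x / (1 + x) ≤ 1 - exp (-x) := by
  have h_exp : exp (-x) * exp x = 1 := by rw [← exp_add, neg_add_cancel, exp_zero]
  rw [div_le_iff₀ (by linarith)]
  nlinarith [add_one_le_exp x, exp_pos (-x)]

lemma one_sub_exp_neg_mul_one_add_le {x : ℝ} (hx : 0 ≤ x) : (1 - exp (-x)) * (1 + x) ≤ 2 * x := by
  nlinarith [one_sub_le_exp_neg x, exp_pos (-x)]

lemma exp_neg_mul_sq_one_add_le_four {x : ℝ} (hx : 0 ≤ x) : exp (-x) * (1 + x) ^ 2 ≤ 4 := by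
  have h_half : (x / 2 + 1) ^ 2 ≤ exp x := by
    rw [← add_halves x, exp_add, ← sq, add_halves]
    gcongr
    exact add_one_le_exp _
  calc exp (-x) * (1 + x) ^ 2 ≤ exp (-x) * (4 * exp x) := by
        gcongr; nlinarith
    _ = 4 := by rw [mul_left_comm, ← exp_add, neg_add_cancel, exp_zero, mul_one]

end Real

namespace Complex

lemma sq_norm_one_sub_exp_neg (z : ℂ) :
    ‖1 - exp (-z)‖ ^ 2 = (1 - Real.exp (-z.re)) ^ 2 + 2 * Real.exp (-z.re) * (1 - Real.cos z.im) := by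
  rw [Complex.sq_norm, normSq_apply]
  simp only [sub_re, sub_im, one_re, one_im, exp_re, exp_im, neg_re, neg_im, Real.cos_neg,
    Real.sin_neg]
  linear_combination (Real.exp (-z.re)) ^ 2 * Real.sin_sq_add_cos_sq z.im

lemma one_sub_exp_neg_re_le_norm (z : ℂ) : 1 - Real.exp (-z.re) ≤ ‖1 - exp (-z)‖ := by
  simpa [norm_exp] using norm_sub_norm_le (1 : ℂ) (exp (-z))

lemma norm_mul_cos_le_re {z : ℂ} {α : ℝ} (h : |arg z| ≤ α) (hα : α ≤ π) :
    ‖z‖ * Real.cos α ≤ z.re := by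
  rw [← norm_mul_cos_arg z, ← Real.cos_abs (arg z)]
  gcongr
  exact cos_le_cos_of_nonneg_of_le_pi (abs_nonneg _) hα h

lemma norm_one_sub_exp_neg_mul_le {z : ℂ} (hz : 0 ≤ z.re) :
    ‖1 - exp (-z)‖ * (1 + z.re) ≤ 2 * ‖z‖ := by
  set u := Real.exp (-z.re)
  have h_re_nonneg : 0 ≤ (1 - u) * (1 + z.re) :=
    mul_nonneg (sub_nonneg.mpr (Real.exp_le_one_iff.mpr (neg_nonpos.mpr hz))) (by linarith)
  have h_re : (1 - u) * (1 + z.re) ≤ 2 * z.re := Real.one_sub_exp_neg_mul_one_add_le hz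
  have h_u : u * (1 + z.re) ^ 2 ≤ 4 := Real.exp_neg_mul_sq_one_add_le_four hz
  have h_cos : 2 * (1 - Real.cos z.im) ≤ z.im ^ 2 := by
    linarith [Real.one_sub_sq_div_two_le_cos (x := z.im)]
  refine (pow_le_pow_iff_left₀ (by positivity) (by positivity) two_ne_zero).mp ?_
  calc (‖1 - exp (-z)‖ * (1 + z.re)) ^ 2
      = ((1 - u) * (1 + z.re)) ^ 2 + u * (1 + z.re) ^ 2 * (2 * (1 - Real.cos z.im)) := by
        rw [mul_pow, sq_norm_one_sub_exp_neg]; ring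
    _ ≤ (2 * z.re) ^ 2 + 4 * z.im ^ 2 := by
        gcongr
        linarith [Real.cos_le_one z.im]
    _ = (2 * ‖z‖) ^ 2 := by linear_combination -4 * sq_norm_sub_sq_re z

end Complex

theorem abs_one_sub_exp_neg_bounds_general (α : ℝ) (hα' : α < Real.pi / 2)
    (z : ℂ) (harg : |Complex.arg z| < α) :
    ‖z‖ * Real.cos α / (1 + ‖z‖ * Real.cos α) ≤
        ‖1 - Complex.exp (-z)‖ ∧
      ‖1 - Complex.exp (-z)‖ ≤ 2 * ‖z‖ / (1 + ‖z‖ * Real.cos α) := by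
  set s := ‖z‖ * Real.cos α
  have hα : 0 ≤ α := (abs_nonneg _).trans harg.le
  have hs : 0 ≤ s := mul_nonneg (norm_nonneg z) (Real.cos_nonneg_of_mem_Icc ⟨by linarith, hα'.le⟩)
  have hs_re : s ≤ z.re := norm_mul_cos_le_re harg.le (by linarith [Real.pi_pos])
  constructor
  · calc s / (1 + s) ≤ 1 - Real.exp (-s) := Real.div_one_add_le_one_sub_exp_neg (by linarith)
      _ ≤ 1 - Real.exp (-z.re) := by gcongr
      _ ≤ ‖1 - Complex.exp (-z)‖ := one_sub_exp_neg_re_le_norm z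
  · calc ‖1 - Complex.exp (-z)‖ ≤ 2 * ‖z‖ / (1 + z.re) := by
          rw [le_div_iff₀ (by linarith)]
          exact norm_one_sub_exp_neg_mul_le (hs.trans hs_re)
      _ ≤ 2 * ‖z‖ / (1 + s) := by gcongr

theorem abs_one_sub_exp_neg_bounds (α : ℝ) (hα : 0 < α) (hα' : α < Real.pi / 2)
    (z : ℂ) (hz : z ≠ 0) (harg : |Complex.arg z| < α) :
    ‖z‖ * Real.cos α / (1 + ‖z‖ * Real.cos α) ≤
        ‖1 - Complex.exp (-z)‖ ∧
      ‖1 - Complex.exp (-z)‖ ≤ 2 * ‖z‖ / (1 + ‖z‖ * Real.cos α) :=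
  abs_one_sub_exp_neg_bounds_general α hα' z harg
end

section
/- Let 0 < α < π/2 and let z be a nonzero complex number with |arg(z)| < α. Then |arg(1 − e^{−z}) − arg(1 + e^{−z})| < α. -/
open Complex Real

private lemma arg_eq_arctan' {w : ℂ} (hw : 0 < w.re) :
    Complex.arg w = Real.arctan (w.im / w.re) := by
  have h : |Complex.arg w| < Real.pi / 2 :=
    Complex.abs_arg_lt_pi_div_two_iff.2 (Or.inl hw)
  rw [abs_lt] at h
  rw [← Complex.tan_arg, Real.arctan_tan (by linarith [h.1]) h.2]

private lemma abs_arctan_lt_iff {α t : ℝ} (hα : 0 < α) (hα' : α < Real.pi / 2) :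
    |Real.arctan t| < α ↔ |t| < Real.tan α := by
  have habs : |Real.arctan t| = Real.arctan |t| := by
    rcases le_or_gt 0 t with h | h
    · have h0 : 0 ≤ Real.arctan t := by
        simpa using Real.arctan_strictMono.monotone h
      rw [_root_.abs_of_nonneg h, _root_.abs_of_nonneg h0]
    · have h0 : Real.arctan t < 0 := by
        simpa using Real.arctan_strictMono h
      rw [_root_.abs_of_neg h, _root_.abs_of_neg h0, ← Real.arctan_neg]
  rw [habs]
  constructor
  · intro h
    by_contra hc
    push_neg at hc
    exact absurd (lt_of_le_of_lt
      (by rw [← Real.arctan_tan (by linarith) hα']; exact Real.arctan_strictMono.monotone hc) h)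
      (lt_irrefl _)
  · intro h
    calc Real.arctan |t| < Real.arctan (Real.tan α) := Real.arctan_strictMono h
      _ = α := Real.arctan_tan (by linarith) hα'

private lemma aux_exp_est {x : ℝ} (hx : 0 < x) :
    2 * Real.exp (-x) * x ≤ 1 - Real.exp (-x) ^ 2 := by
  have hs : x < Real.sinh x := Real.self_lt_sinh_iff.2 hx
  rw [Real.sinh_eq] at hs
  have hmul : Real.exp (-x) * Real.exp x = 1 := by rw [← Real.exp_add]; simp
  nlinarith [Real.exp_pos (-x), hs]

theorem abs_arg_sub_arg_lt (α : ℝ) (hα : 0 < α) (hα' : α < Real.pi / 2)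
    (z : ℂ) (hz : z ≠ 0) (harg : |Complex.arg z| < α) :
    |Complex.arg (1 - Complex.exp (-z)) - Complex.arg (1 + Complex.exp (-z))| < α := by
  have hπ := Real.pi_pos
  have hx : 0 < z.re :=
    (Complex.abs_arg_lt_pi_div_two_iff.1 (harg.trans hα')).resolve_right hz
  have htanα : 0 < Real.tan α := Real.tan_pos_of_pos_of_lt_pi_div_two hα hα'
  have hy : |z.im| < Real.tan α * z.re := by
    have h1 : Complex.arg z = Real.arctan (z.im / z.re) := arg_eq_arctan' hx
    have h2 : |z.im / z.re| < Real.tan α := (abs_arctan_lt_iff hα hα').1 (h1 ▸ harg)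
    rwa [abs_div, _root_.abs_of_pos hx, div_lt_iff₀ hx] at h2
  have he0 : 0 < Real.exp (-z.re) := Real.exp_pos _
  have he1 : Real.exp (-z.re) < 1 := Real.exp_lt_one_iff.2 (by linarith)
  have hure : (Complex.exp (-z)).re = Real.exp (-z.re) * Real.cos z.im := by
    rw [Complex.exp_re]; simp
  have huim : (Complex.exp (-z)).im = -(Real.exp (-z.re) * Real.sin z.im) := by
    rw [Complex.exp_im]; simp
  have hecos : Real.exp (-z.re) * Real.cos z.im ≤ Real.exp (-z.re) := by
    nlinarith [Real.cos_le_one z.im]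
  have hecos' : -Real.exp (-z.re) ≤ Real.exp (-z.re) * Real.cos z.im := by
    nlinarith [Real.neg_one_le_cos z.im]
  have hA : 0 < (1 - Complex.exp (-z)).re := by
    simp only [Complex.sub_re, Complex.one_re, hure]; linarith
  have hB : 0 < (1 + Complex.exp (-z)).re := by
    simp only [Complex.add_re, Complex.one_re, hure]; linarith
  have hAne : (1 - Complex.exp (-z)) ≠ 0 := fun h => by simp [h] at hA
  have hBne : (1 + Complex.exp (-z)) ≠ 0 := fun h => by simp [h] at hB
  have hargA : |Complex.arg (1 - Complex.exp (-z))| < Real.pi / 2 :=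
    Complex.abs_arg_lt_pi_div_two_iff.2 (Or.inl hA)
  have hargB : |Complex.arg (1 + Complex.exp (-z))| < Real.pi / 2 :=
    Complex.abs_arg_lt_pi_div_two_iff.2 (Or.inl hB)
  rw [abs_lt] at hargA hargB
  have hconjne : (starRingEnd ℂ) (1 + Complex.exp (-z)) ≠ 0 := by
    simpa only [map_ne_zero] using hBne
  have hargconj : Complex.arg ((starRingEnd ℂ) (1 + Complex.exp (-z)))
      = -Complex.arg (1 + Complex.exp (-z)) := by
    rw [Complex.arg_conj]
    rw [if_neg (by intro h; rw [h] at hargB; linarith [hargB.2])]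
  have hsum : Complex.arg (1 - Complex.exp (-z))
      + Complex.arg ((starRingEnd ℂ) (1 + Complex.exp (-z)))
      ∈ Set.Ioc (-Real.pi) Real.pi := by
    rw [hargconj]
    constructor
    · linarith [hargA.1, hargB.2]
    · linarith [hargA.2, hargB.1]
  have hargP : Complex.arg ((1 - Complex.exp (-z)) * (starRingEnd ℂ) (1 + Complex.exp (-z)))
      = Complex.arg (1 - Complex.exp (-z)) - Complex.arg (1 + Complex.exp (-z)) := by
    rw [Complex.arg_mul hAne hconjne hsum, hargconj]; ring
  have hPre : ((1 - Complex.exp (-z)) * (starRingEnd ℂ) (1 + Complex.exp (-z))).re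
      = 1 - Real.exp (-z.re) ^ 2 := by
    simp only [Complex.mul_re, Complex.conj_re, Complex.conj_im, Complex.add_re,
      Complex.add_im, Complex.sub_re, Complex.sub_im, Complex.one_re, Complex.one_im,
      hure, huim]
    nlinarith [Real.sin_sq_add_cos_sq z.im]
  have hPim : ((1 - Complex.exp (-z)) * (starRingEnd ℂ) (1 + Complex.exp (-z))).im
      = 2 * (Real.exp (-z.re) * Real.sin z.im) := by
    simp only [Complex.mul_im, Complex.conj_re, Complex.conj_im, Complex.add_re,
      Complex.add_im, Complex.sub_re, Complex.sub_im, Complex.one_re, Complex.one_im,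
      hure, huim]
    ring
  have hPrepos : 0 < ((1 - Complex.exp (-z)) * (starRingEnd ℂ) (1 + Complex.exp (-z))).re := by
    rw [hPre]; nlinarith
  have hkey : |((1 - Complex.exp (-z)) * (starRingEnd ℂ) (1 + Complex.exp (-z))).im|
      < Real.tan α * ((1 - Complex.exp (-z)) * (starRingEnd ℂ) (1 + Complex.exp (-z))).re := by
    rw [hPim, hPre]
    have h1 : |2 * (Real.exp (-z.re) * Real.sin z.im)|
        = 2 * Real.exp (-z.re) * |Real.sin z.im| := by
      rw [abs_mul, abs_mul, _root_.abs_of_nonneg (by norm_num : (0:ℝ) ≤ 2),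
        _root_.abs_of_pos he0]; ring
    rw [h1]
    have h2 : |Real.sin z.im| ≤ |z.im| := Real.abs_sin_le_abs
    have h3 : 2 * Real.exp (-z.re) * z.re ≤ 1 - Real.exp (-z.re) ^ 2 := aux_exp_est hx
    calc 2 * Real.exp (-z.re) * |Real.sin z.im| ≤ 2 * Real.exp (-z.re) * |z.im| :=
        mul_le_mul_of_nonneg_left h2 (by positivity)
      _ < 2 * Real.exp (-z.re) * (Real.tan α * z.re) :=
        mul_lt_mul_of_pos_left hy (by positivity)
      _ = Real.tan α * (2 * Real.exp (-z.re) * z.re) := by ring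
      _ ≤ Real.tan α * (1 - Real.exp (-z.re) ^ 2) :=
        mul_le_mul_of_nonneg_left h3 htanα.le
  rw [← hargP, arg_eq_arctan' hPrepos, abs_arctan_lt_iff hα hα',
    abs_div, _root_.abs_of_pos hPrepos, div_lt_iff₀ hPrepos]
  exact hkey
end

section
/- Let α ∈ (0, π/2], β ∈ [0, α/2], and let z be a nonzero complex number with |Im(z)| ≤ π and −β ≤ arg(z) < α − β. Then −β ≤ arg(1 − e^{−z}) − arg(1 + e^{−z}) < α − β. -/
/-!
Since `arg` is additive on the right half-plane, `arg (1 - e^{-z}) - arg (1 + e^{-z})` is the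
argument of `(1 - e^{-z}) / (1 + e^{-z}) = tanh (z / 2)`, which for `z = x + iy` with `x > 0`
equals `arctan (sin y / sinh x)`. As `sinh x ≥ x` and, for `|y| ≤ π`, `sin y` lies between `0`
and `y`, this lies between `0` and `arctan (y / x) = arg z`; the hypotheses on `arg z` force
`x > 0` and make both `0` and `arg z` lie in `[-β, α - β)`.
-/

open Complex Real

namespace Complex

theorem arg_eq_arctan_of_re_pos {w : ℂ} (h : 0 < w.re) : arg w = Real.arctan (w.im / w.re) := by
  obtain ⟨hlo, hhi⟩ := abs_lt.mp (abs_arg_lt_pi_div_two_iff.mpr (Or.inl h))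
  rw [← tan_arg w, Real.arctan_tan (by linarith) hhi]

theorem arg_div_of_re_pos {u v : ℂ} (hu : 0 < u.re) (hv : 0 < v.re) :
    arg (u / v) = arg u - arg v := by
  obtain ⟨hu₁, hu₂⟩ := abs_lt.mp (abs_arg_lt_pi_div_two_iff.mpr (Or.inl hu))
  obtain ⟨hv₁, hv₂⟩ := abs_lt.mp (abs_arg_lt_pi_div_two_iff.mpr (Or.inl hv))
  rw [← arg_coe_angle_toReal_eq_arg, arg_div_coe_angle (ne_zero_of_re_pos hu)
    (ne_zero_of_re_pos hv), ← Real.Angle.coe_sub, Real.Angle.toReal_coe_eq_self_iff]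
  constructor <;> linarith

theorem arg_one_sub_sub_arg_one_add {w : ℂ} (hw : ‖w‖ < 1) :
    arg (1 - w) - arg (1 + w) = Real.arctan (-2 * w.im / (1 - ‖w‖ ^ 2)) := by
  obtain ⟨hre₁, hre₂⟩ := abs_lt.mp ((abs_re_le_norm w).trans_lt hw)
  have hu : 0 < (1 - w).re := by rw [sub_re, one_re]; linarith
  have hv : 0 < (1 + w).re := by rw [add_re, one_re]; linarith
  have hN : 0 < normSq (1 + w) := normSq_pos.mpr (ne_zero_of_re_pos hv)
  have hsq : ‖w‖ ^ 2 = w.re ^ 2 + w.im ^ 2 := by rw [← normSq_eq_norm_sq, normSq_apply]; ring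
  -- multiplying by the conjugate of `1 + w`: `(1 - w) * conj (1 + w) = 1 - ‖w‖ ^ 2 - 2 * w.im * I`
  have hdiv_re : ((1 - w) / (1 + w)).re = (1 - ‖w‖ ^ 2) / normSq (1 + w) := by
    rw [div_re, ← add_div, hsq]; simp only [sub_re, add_re, one_re, sub_im, add_im, one_im]; ring
  have hdiv_im : ((1 - w) / (1 + w)).im = -2 * w.im / normSq (1 + w) := by
    rw [div_im, ← sub_div]; simp only [sub_re, add_re, one_re, sub_im, add_im, one_im]; ring
  have hpos : 0 < 1 - ‖w‖ ^ 2 := by nlinarith [norm_nonneg w]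
  rw [← arg_div_of_re_pos hu hv, arg_eq_arctan_of_re_pos (by rw [hdiv_re]; exact div_pos hpos hN), hdiv_re,
    hdiv_im, div_div_div_cancel_right₀ hN.ne']

theorem arg_one_sub_exp_neg_sub_arg_one_add_exp_neg {z : ℂ} (hz : 0 < z.re) :
    arg (1 - exp (-z)) - arg (1 + exp (-z)) = Real.arctan (Real.sin z.im / Real.sinh z.re) := by
  have hlt : ‖exp (-z)‖ < 1 := by rw [norm_exp, neg_re, Real.exp_lt_one_iff]; linarith
  have hsinh : Real.sinh z.re = (1 - Real.exp (-z.re) ^ 2) / (2 * Real.exp (-z.re)) := by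
    rw [Real.sinh_eq, Real.exp_neg]; field_simp
  have hsinh_pos : 0 < Real.sinh z.re := Real.sinh_pos_iff.mpr hz
  rw [arg_one_sub_sub_arg_one_add hlt, norm_exp, exp_im, neg_re, neg_im, Real.sin_neg, hsinh]
  rw [hsinh] at hsinh_pos
  congr 1
  field_simp

end Complex

theorem Real.sin_div_sinh_mem_uIcc {x y : ℝ} (hx : 0 < x) (hy : |y| ≤ π) :
    Real.sin y / Real.sinh x ∈ Set.uIcc 0 (y / x) := by
  have hsx : 0 < Real.sinh x := Real.sinh_pos_iff.mpr hx
  have hxs : x ≤ Real.sinh x := (Real.self_lt_sinh_iff.mpr hx).le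
  obtain ⟨hy₁, hy₂⟩ := abs_le.mp hy
  rw [Set.mem_uIcc]
  rcases le_or_gt 0 y with h | h
  · have hsin : Real.sin y ≤ y := Real.sin_le h
    refine Or.inl ⟨div_nonneg (Real.sin_nonneg_of_nonneg_of_le_pi h hy₂) hsx.le, ?_⟩
    rw [div_le_div_iff₀ hsx hx]; nlinarith
  · have hsin : y ≤ Real.sin y := Real.le_sin h.le
    refine Or.inr ⟨?_, div_nonpos_of_nonpos_of_nonneg
      (Real.sin_nonpos_of_nonpos_of_neg_pi_le h.le hy₁) hsx.le⟩
    rw [div_le_div_iff₀ hx hsx]; nlinarith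

theorem arg_sub_arg_shifted_bounds_general (α β : ℝ) (hα' : α ≤ Real.pi / 2)
    (hβ : 0 ≤ β) (hβ' : β ≤ α / 2) (z : ℂ) (hz : z ≠ 0) (him : |z.im| ≤ Real.pi)
    (harg₁ : -β ≤ Complex.arg z) (harg₂ : Complex.arg z < α - β) :
    -β ≤ Complex.arg (1 - Complex.exp (-z)) - Complex.arg (1 + Complex.exp (-z)) ∧
      Complex.arg (1 - Complex.exp (-z)) - Complex.arg (1 + Complex.exp (-z)) < α - β := by
  have hre : 0 < z.re := by
    have : |arg z| < π / 2 := abs_lt.mpr ⟨by linarith, by linarith⟩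
    exact (abs_arg_lt_pi_div_two_iff.mp this).resolve_right hz
  have hmem : arg (1 - exp (-z)) - arg (1 + exp (-z)) ∈ Set.uIcc 0 (arg z) := by
    rw [arg_one_sub_exp_neg_sub_arg_one_add_exp_neg hre, arg_eq_arctan_of_re_pos hre,
      ← arctan_zero]
    exact arctan_strictMono.monotone.image_uIcc_subset
      (Set.mem_image_of_mem _ (sin_div_sinh_mem_uIcc hre him))
  rcases Set.mem_uIcc.mp hmem with ⟨h₁, h₂⟩ | ⟨h₁, h₂⟩ <;> constructor <;> linarith

theorem arg_sub_arg_shifted_bounds (α β : ℝ) (hα : 0 < α) (hα' : α ≤ Real.pi / 2)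
    (hβ : 0 ≤ β) (hβ' : β ≤ α / 2) (z : ℂ) (hz : z ≠ 0) (him : |z.im| ≤ Real.pi)
    (harg₁ : -β ≤ Complex.arg z) (harg₂ : Complex.arg z < α - β) :
    -β ≤ Complex.arg (1 - Complex.exp (-z)) - Complex.arg (1 + Complex.exp (-z)) ∧
      Complex.arg (1 - Complex.exp (-z)) - Complex.arg (1 + Complex.exp (-z)) < α - β :=
  arg_sub_arg_shifted_bounds_general α β hα' hβ hβ' z hz him harg₁ harg₂
end

section
/- Let 0 < ε0 < ε1 < π/2 and let z, μ be complex numbers with z ≠ 0, |arg(z)| < ε0, and μ = 0 or |arg(μ)| < π − ε1, with z + μ ≠ 0. Then cos((arg(z) − arg(μ))/2) ≥ sin((ε1 − ε0)/2) > 0 (interpreting arg(0) = 0), and consequently |z + μ| ≥ |z| · sin((ε1 − ε0)/2). -/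
/-! The angle between `z` and `μ` is less than `π - (ε₁ - ε₀)`, so half of it is at most
`π / 2 - (ε₁ - ε₀) / 2` and its cosine is at least `sin ((ε₁ - ε₀) / 2)`. The law of cosines,
rewritten with `cos θ = 2 cos² (θ / 2) - 1`, gives
`‖z + μ‖² - (‖z‖ + ‖μ‖)² cos² (θ / 2) = (‖z‖ - ‖μ‖)² (1 - cos θ) / 2 ≥ 0`. -/

open Complex Real

namespace Complex

/-- Holds for `z = 0` or `w = 0` as well, whatever the junk value `arg 0 = 0`. -/
theorem sq_norm_add_eq_add_mul_cos_arg_sub (z w : ℂ) :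
    ‖z + w‖ ^ 2 = ‖z‖ ^ 2 + ‖w‖ ^ 2 + 2 * ‖z‖ * ‖w‖ * Real.cos (arg z - arg w) := by
  rcases eq_or_ne z 0 with rfl | hz
  · simp
  rcases eq_or_ne w 0 with rfl | hw
  · simp
  have hz' : ‖z‖ ≠ 0 := norm_ne_zero_iff.mpr hz
  have hw' : ‖w‖ ≠ 0 := norm_ne_zero_iff.mpr hw
  rw [Real.cos_sub, cos_arg hz, cos_arg hw, sin_arg, sin_arg,
    Complex.sq_norm, Complex.sq_norm, Complex.sq_norm]
  simp only [normSq_apply, add_re, add_im]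
  field_simp
  ring

theorem add_mul_abs_cos_half_arg_sub_le_norm_add (z w : ℂ) :
    (‖z‖ + ‖w‖) * |Real.cos ((arg z - arg w) / 2)| ≤ ‖z + w‖ := by
  set θ := arg z - arg w
  have hcos_sq : Real.cos (θ / 2) ^ 2 = 1 / 2 + Real.cos θ / 2 := by
    rw [Real.cos_sq, mul_div_cancel₀ θ two_ne_zero]
  have hgap : 0 ≤ (‖z‖ - ‖w‖) ^ 2 * (1 - Real.cos θ) :=
    mul_nonneg (sq_nonneg _) (sub_nonneg.mpr (Real.cos_le_one θ))
  rw [← sq_le_sq₀ (by positivity) (norm_nonneg _), mul_pow, sq_abs, hcos_sq,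
    sq_norm_add_eq_add_mul_cos_arg_sub]
  linear_combination (1 / 2) * hgap

end Complex

theorem Real.sin_le_cos_of_abs_le_pi_div_two_sub {x δ : ℝ} (hδ : -(π / 2) ≤ δ)
    (hx : |x| ≤ π / 2 - δ) : Real.sin δ ≤ Real.cos x := by
  rw [← Real.cos_pi_div_two_sub, ← Real.cos_abs x]
  exact Real.cos_le_cos_of_nonneg_of_le_pi (abs_nonneg x) (by linarith) hx

theorem cos_half_arg_sub_ge_general (ε₀ ε₁ : ℝ) (h₀₁ : ε₀ < ε₁)
    (h₁ : ε₁ < Real.pi / 2) (z μ : ℂ) (hargz : |Complex.arg z| < ε₀)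
    (hμ : μ = 0 ∨ |Complex.arg μ| < Real.pi - ε₁) :
    Real.cos ((Complex.arg z - Complex.arg μ) / 2) ≥ Real.sin ((ε₁ - ε₀) / 2) ∧
      Real.sin ((ε₁ - ε₀) / 2) > 0 ∧
      ‖z + μ‖ ≥ ‖z‖ * Real.sin ((ε₁ - ε₀) / 2) := by
  have h₀ : 0 < ε₀ := (abs_nonneg _).trans_lt hargz
  have hargμ : |arg μ| < π - ε₁ := by
    rcases hμ with rfl | h
    · simp only [arg_zero, abs_zero]
      linarith [pi_pos]
    · exact h
  have hhalf : |(arg z - arg μ) / 2| ≤ π / 2 - (ε₁ - ε₀) / 2 := by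
    rw [abs_div, abs_two]
    linarith [abs_sub (arg z) (arg μ)]
  have hcos := Real.sin_le_cos_of_abs_le_pi_div_two_sub (by linarith) hhalf
  have hsin : 0 < Real.sin ((ε₁ - ε₀) / 2) :=
    Real.sin_pos_of_pos_of_lt_pi (by linarith) (by linarith)
  refine ⟨hcos, hsin, ?_⟩
  calc ‖z‖ * Real.sin ((ε₁ - ε₀) / 2)
      ≤ (‖z‖ + ‖μ‖) * |Real.cos ((arg z - arg μ) / 2)| := by
        gcongr
        · exact le_add_of_nonneg_right (norm_nonneg μ)
        · exact hcos.trans (le_abs_self _)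
    _ ≤ ‖z + μ‖ := add_mul_abs_cos_half_arg_sub_le_norm_add z μ

theorem cos_half_arg_sub_ge (ε₀ ε₁ : ℝ) (h₀ : 0 < ε₀) (h₀₁ : ε₀ < ε₁)
    (h₁ : ε₁ < Real.pi / 2) (z μ : ℂ) (hz : z ≠ 0) (hargz : |Complex.arg z| < ε₀)
    (hμ : μ = 0 ∨ |Complex.arg μ| < Real.pi - ε₁) (hzμ : z + μ ≠ 0) :
    Real.cos ((Complex.arg z - Complex.arg μ) / 2) ≥ Real.sin ((ε₁ - ε₀) / 2) ∧
      Real.sin ((ε₁ - ε₀) / 2) > 0 ∧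
      ‖z + μ‖ ≥ ‖z‖ * Real.sin ((ε₁ - ε₀) / 2) :=
  cos_half_arg_sub_ge_general ε₀ ε₁ h₀₁ h₁ z μ hargz hμ
end

section
/- Let 0 < α < π/2 and let z be a nonzero complex number with |arg(z)| < α. Then |(1 − e^{−z}) / (1 + e^{−z})| ≤ 2|z| / ( (1 + |z|·cos(α)) · (1 − e^{−π/(2·tan(α))}) ). -/
/-!
Write `x = Re z > 0`. Since `1 - e^{-z} = z ∫₀¹ e^{-tz} dt`, we get
`|1 - e^{-z}| ≤ |z| (1 - e^{-x}) / x ≤ 2|z| / (1 + x)`, and `x ≥ |z| cos α` in the sector.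
For the denominator, either `|Im z| ≤ π/2`, so that `Re (1 + e^{-z}) ≥ 1`, or
`π/2 < |Im z| ≤ x tan α`, so that `|1 + e^{-z}| ≥ 1 - e^{-x} ≥ 1 - e^{-π/(2 tan α)}`.
-/

open Complex Real

namespace Real

lemma one_sub_exp_neg_div_le {x : ℝ} (hx : 0 < x) : (1 - exp (-x)) / x ≤ 2 / (1 + x) := by
  rw [div_le_div_iff₀ hx (by linarith)]
  -- `1 - x ≤ (1 + x) e^{-x}`: from `e^{-x} ≥ 1 - x` if `x ≤ 1`, trivially otherwise
  nlinarith [add_one_le_exp (-x), exp_pos (-x)]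

end Real

namespace Complex

lemma norm_one_sub_exp_neg_le {z : ℂ} (hz : z.re ≠ 0) :
    ‖1 - exp (-z)‖ ≤ ‖z‖ * ((1 - Real.exp (-z.re)) / z.re) := by
  have hz0 : z ≠ 0 := by rintro rfl; exact hz rfl
  have hint : 1 - exp (-z) = z * ∫ t in (0 : ℝ)..1, exp (-z * t) := by
    rw [integral_exp_mul_complex (neg_ne_zero.2 hz0)]
    field_simp
    simp
  have hreal : ∫ t in (0 : ℝ)..1, Real.exp (-z.re * t) = (1 - Real.exp (-z.re)) / z.re := by
    rw [intervalIntegral.integral_comp_mul_left Real.exp (neg_ne_zero.2 hz)]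
    simp only [inv_neg, mul_zero, mul_one, integral_exp, Real.exp_zero, smul_eq_mul, neg_mul]
    field_simp
    ring
  calc ‖1 - exp (-z)‖ = ‖z‖ * ‖∫ t in (0 : ℝ)..1, exp (-z * t)‖ := by rw [hint, norm_mul]
    _ ≤ ‖z‖ * ∫ t in (0 : ℝ)..1, ‖exp (-z * t)‖ := by
      gcongr
      exact intervalIntegral.norm_integral_le_integral_norm zero_le_one
    _ = ‖z‖ * ∫ t in (0 : ℝ)..1, Real.exp (-z.re * t) := by simp [norm_exp]
    _ = ‖z‖ * ((1 - Real.exp (-z.re)) / z.re) := by rw [hreal]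

lemma norm_one_sub_exp_neg_le_two_mul_div {z : ℂ} (hz : 0 < z.re) :
    ‖1 - exp (-z)‖ ≤ 2 * ‖z‖ / (1 + z.re) :=
  calc ‖1 - exp (-z)‖ ≤ ‖z‖ * ((1 - Real.exp (-z.re)) / z.re) := norm_one_sub_exp_neg_le hz.ne'
    _ ≤ ‖z‖ * (2 / (1 + z.re)) :=
      mul_le_mul_of_nonneg_left (one_sub_exp_neg_div_le hz) (norm_nonneg z)
    _ = 2 * ‖z‖ / (1 + z.re) := by ring

lemma one_le_norm_one_add_exp {z : ℂ} (h : |z.im| ≤ π / 2) : 1 ≤ ‖1 + exp z‖ := by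
  have hcos : 0 ≤ Real.cos z.im := Real.cos_nonneg_of_mem_Icc (abs_le.1 h)
  calc (1 : ℝ) ≤ (1 + exp z).re := by
        simp only [add_re, one_re, exp_re, le_add_iff_nonneg_right]
        positivity
    _ ≤ ‖1 + exp z‖ := re_le_norm _

lemma one_sub_exp_re_le_norm_one_add_exp (z : ℂ) : 1 - Real.exp z.re ≤ ‖1 + exp z‖ := by
  simpa [norm_exp] using norm_sub_le_norm_add (1 : ℂ) (exp z)

lemma one_sub_exp_neg_pi_div_le_norm_one_add_exp_neg {z : ℂ} {t : ℝ} (ht : 0 < t)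
    (h : |z.im| ≤ z.re * t) : 1 - Real.exp (-π / (2 * t)) ≤ ‖1 + exp (-z)‖ := by
  rcases le_or_gt |z.im| (π / 2) with him | him
  · exact (sub_le_self _ (Real.exp_pos _).le).trans (one_le_norm_one_add_exp (by simpa using him))
  · have hre : π / (2 * t) ≤ z.re := by rw [div_le_iff₀ (by positivity)]; linarith
    calc 1 - Real.exp (-π / (2 * t)) ≤ 1 - Real.exp (-z).re := by
          gcongr; rw [neg_re, neg_div]; linarith
      _ ≤ ‖1 + exp (-z)‖ := one_sub_exp_re_le_norm_one_add_exp (-z)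

lemma abs_im_mul_cos_le_re_mul_sin {z : ℂ} {α : ℝ} (h : |arg z| ≤ α) (hα : α ≤ π) :
    |z.im| * Real.cos α ≤ z.re * Real.sin α := by
  rw [← norm_mul_cos_arg z, ← norm_mul_sin_arg z, abs_mul, abs_norm,
    abs_sin_eq_sin_abs_of_abs_le_pi (abs_arg_le_pi z), ← Real.cos_abs (arg z)]
  have hsin : 0 ≤ Real.sin (α - |arg z|) :=
    Real.sin_nonneg_of_nonneg_of_le_pi (by linarith) (by linarith [abs_nonneg (arg z)])
  rw [Real.sin_sub] at hsin
  linear_combination mul_nonneg (norm_nonneg z) hsin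

lemma abs_im_le_re_mul_tan {z : ℂ} {α : ℝ} (h : |arg z| ≤ α) (hα : α < π / 2) :
    |z.im| ≤ z.re * Real.tan α := by
  have hcos : 0 < Real.cos α :=
    Real.cos_pos_of_mem_Ioo ⟨by linarith [pi_pos, abs_nonneg (arg z)], hα⟩
  rw [Real.tan_eq_sin_div_cos, ← mul_div_assoc, le_div_iff₀ hcos]
  exact abs_im_mul_cos_le_re_mul_sin h (by linarith [pi_pos])

end Complex

theorem abs_ratio_le (α : ℝ) (hα : 0 < α) (hα' : α < Real.pi / 2)
    (z : ℂ) (hz : z ≠ 0) (harg : |Complex.arg z| < α) :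
    ‖(1 - Complex.exp (-z)) / (1 + Complex.exp (-z))‖ ≤
      2 * ‖z‖ /
        ((1 + ‖z‖ * Real.cos α) * (1 - Real.exp (-Real.pi / (2 * Real.tan α)))) := by
  have hcos : 0 < Real.cos α := Real.cos_pos_of_mem_Ioo ⟨by linarith, hα'⟩
  have htan : 0 < Real.tan α := Real.tan_pos_of_pos_of_lt_pi_div_two hα hα'
  have hre : ‖z‖ * Real.cos α ≤ z.re := norm_mul_cos_le_re harg.le (by linarith [pi_pos])
  have hre_pos : 0 < z.re := (mul_pos (norm_pos_iff.2 hz) hcos).trans_le hre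
  have hnum : ‖1 - Complex.exp (-z)‖ ≤ 2 * ‖z‖ / (1 + ‖z‖ * Real.cos α) :=
    (norm_one_sub_exp_neg_le_two_mul_div hre_pos).trans (by gcongr)
  have hden :=
    one_sub_exp_neg_pi_div_le_norm_one_add_exp_neg htan (abs_im_le_re_mul_tan harg.le hα')
  have hden_pos : 0 < 1 - Real.exp (-Real.pi / (2 * Real.tan α)) := by
    rw [sub_pos, Real.exp_lt_one_iff, neg_div, neg_lt_zero]
    positivity
  rw [norm_div, ← div_div]
  exact div_le_div₀ (by positivity) hnum hden_pos hden
end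

section
/- Let 0 < ε0 < ε1 < π/2 and L̄ > 0. There exists a constant C > 0 such that for all nonzero complex z with |arg(z)| < ε0 and all μ with μ = 0 or |arg(μ)| < π − ε1 (and z + μ ≠ 0), one has | (1 − e^{−L̄·√(z+μ)}) / ( √(z+μ) · (1 + e^{−L̄·√(z+μ)}) ) | ≤ C / |z|^{1/2}. -/
/-!
Put `x = z + μ` and `s = x ^ (1/2)`. The sector `|arg x| ≤ π - ε₁` is the union of the two
half-planes `0 ≤ Im (x e^{it})` with `t = ε₁` and `t = π - ε₁`. Pick the one containing `μ`.
The functional `x ↦ Im (x e^{it}) = ‖x‖ sin (arg x + t)` is additive, it is nonnegative at `μ`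
and at least `‖z‖ sin (ε₁ - ε₀)` at `z`, so the same lower bound holds at `z + μ`. That gives
`‖z + μ‖ ≥ sin (ε₁ - ε₀) ‖z‖` and `|arg (z + μ)| ≤ π - ε₁`. So `w = L s` lies in the sector
`|arg w| ≤ (π - ε₁) / 2`. There `‖1 - e^{-w}‖ ≤ 2`, and `‖1 + e^{-w}‖` is bounded below:
either `Re w` is large, or `|Im w| < π / 2` and then `Re e^{-w} > 0`.
-/

open Complex Real

theorem Real.sin_le_sin_of_le_of_le_pi_sub {a y : ℝ} (ha : -(π / 2) ≤ a) (hay : a ≤ y)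
    (hya : y ≤ π - a) : Real.sin a ≤ Real.sin y := by
  rcases le_total y (π / 2) with hy | hy
  · exact Real.sin_le_sin_of_le_of_le_pi_div_two ha hy hay
  · rw [← Real.sin_pi_sub y]
    exact Real.sin_le_sin_of_le_of_le_pi_div_two ha (by linarith) (by linarith)

theorem Complex.im_mul_exp_ofReal_mul_I (x : ℂ) (t : ℝ) :
    (x * exp (t * I)).im = ‖x‖ * Real.sin (arg x + t) := by
  rw [mul_im, exp_ofReal_mul_I_re, exp_ofReal_mul_I_im, Real.sin_add, ← norm_mul_cos_arg,
    ← norm_mul_sin_arg]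
  ring

theorem Complex.abs_arg_le_of_im_mul_exp_nonneg {x : ℂ} {ε t : ℝ} (hx : x ≠ 0) (hε : 0 < ε)
    (ht : t ∈ Set.Icc ε (π - ε)) (h : 0 ≤ (x * exp (t * I)).im) : |arg x| ≤ π - ε := by
  rw [im_mul_exp_ofReal_mul_I] at h
  have hsin : 0 ≤ Real.sin (arg x + t) := nonneg_of_mul_nonneg_right h (norm_pos_iff.mpr hx)
  have hlo : 0 ≤ arg x + t := by
    by_contra! hneg
    linarith [Real.sin_neg_of_neg_of_neg_pi_lt hneg (by linarith [neg_pi_lt_arg x, ht.1])]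
  have hhi : arg x + t ≤ π := by
    by_contra! hbig
    have : 0 < Real.sin (arg x + t - π) :=
      Real.sin_pos_of_pos_of_lt_pi (by linarith) (by linarith [arg_le_pi x, ht.2])
    linarith [Real.sin_sub_pi (arg x + t)]
  exact abs_le.mpr ⟨by linarith [ht.2], by linarith [ht.1]⟩

theorem Complex.norm_mul_sin_sub_le_im_mul_exp {z : ℂ} {δ ε t : ℝ} (hz : |arg z| ≤ δ)
    (hδε : δ ≤ ε) (ht : t ∈ Set.Icc ε (π - ε)) :
    ‖z‖ * Real.sin (ε - δ) ≤ (z * exp (t * I)).im := by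
  rw [im_mul_exp_ofReal_mul_I]
  obtain ⟨hz₁, hz₂⟩ := abs_le.mp hz
  gcongr
  exact Real.sin_le_sin_of_le_of_le_pi_sub (by linarith [Real.pi_pos]) (by linarith [ht.1])
    (by linarith [ht.2])

theorem Complex.exists_im_mul_exp_nonneg {μ : ℂ} {ε : ℝ} (hμ : |arg μ| ≤ π - ε) (hε₀ : 0 ≤ ε)
    (hε : ε ≤ π / 2) : ∃ t ∈ Set.Icc ε (π - ε), 0 ≤ (μ * exp (t * I)).im := by
  simp_rw [im_mul_exp_ofReal_mul_I]
  obtain ⟨hμ₁, hμ₂⟩ := abs_le.mp hμ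
  rcases le_total (-ε) (arg μ) with h | h
  · exact ⟨ε, ⟨le_rfl, by linarith⟩, mul_nonneg (norm_nonneg μ)
      (Real.sin_nonneg_of_nonneg_of_le_pi (by linarith) (by linarith))⟩
  · exact ⟨π - ε, ⟨by linarith, le_rfl⟩, mul_nonneg (norm_nonneg μ)
      (Real.sin_nonneg_of_nonneg_of_le_pi (by linarith) (by linarith))⟩

theorem Complex.exists_norm_mul_sin_sub_le_im_add_mul_exp {z μ : ℂ} {δ ε : ℝ}
    (hz : |arg z| ≤ δ) (hμ : |arg μ| ≤ π - ε) (hδε : δ ≤ ε) (hε : ε ≤ π / 2) :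
    ∃ t ∈ Set.Icc ε (π - ε), ‖z‖ * Real.sin (ε - δ) ≤ ((z + μ) * exp (t * I)).im := by
  obtain ⟨t, ht, hμt⟩ := exists_im_mul_exp_nonneg hμ ((abs_nonneg _).trans (hz.trans hδε)) hε
  refine ⟨t, ht, ?_⟩
  rw [add_mul, add_im]
  linarith [norm_mul_sin_sub_le_im_mul_exp hz hδε ht]

theorem Complex.abs_arg_add_le {z μ : ℂ} {δ ε : ℝ} (hz : |arg z| ≤ δ) (hμ : |arg μ| ≤ π - ε)
    (hδε : δ ≤ ε) (hε₀ : 0 < ε) (hε : ε ≤ π / 2) (hzμ : z + μ ≠ 0) :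
    |arg (z + μ)| ≤ π - ε := by
  obtain ⟨t, ht, h⟩ := exists_norm_mul_sin_sub_le_im_add_mul_exp hz hμ hδε hε
  have hsin : 0 ≤ Real.sin (ε - δ) :=
    Real.sin_nonneg_of_nonneg_of_le_pi (by linarith) (by linarith [abs_nonneg (arg z)])
  exact abs_arg_le_of_im_mul_exp_nonneg hzμ hε₀ ht ((mul_nonneg (norm_nonneg z) hsin).trans h)

theorem Complex.sin_sub_mul_norm_le_norm_add {z μ : ℂ} {δ ε : ℝ} (hz : |arg z| ≤ δ)
    (hμ : |arg μ| ≤ π - ε) (hδε : δ ≤ ε) (hε : ε ≤ π / 2) :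
    Real.sin (ε - δ) * ‖z‖ ≤ ‖z + μ‖ := by
  obtain ⟨t, -, h⟩ := exists_norm_mul_sin_sub_le_im_add_mul_exp hz hμ hδε hε
  calc Real.sin (ε - δ) * ‖z‖ ≤ ((z + μ) * exp (t * I)).im := by linarith
    _ ≤ ‖(z + μ) * exp (t * I)‖ := im_le_norm _
    _ = ‖z + μ‖ := by rw [norm_mul, norm_exp_ofReal_mul_I, mul_one]

theorem Complex.cos_mul_norm_cpow_le_re {x : ℂ} {p θ : ℝ} (hp : 0 ≤ p) (hx : |arg x| ≤ θ)
    (hθ : p * θ ≤ π) : Real.cos (p * θ) * ‖x ^ (p : ℂ)‖ ≤ (x ^ (p : ℂ)).re := by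
  rw [cpow_ofReal_re, norm_cpow_real, mul_comm]
  gcongr
  rw [← Real.cos_abs (arg x * p), abs_mul, abs_of_nonneg hp, mul_comm (|arg x|)]
  exact Real.cos_le_cos_of_nonneg_of_le_pi (by positivity) hθ (by gcongr)

theorem Complex.norm_one_sub_exp_neg_le_two {w : ℂ} (hw : 0 ≤ w.re) : ‖1 - exp (-w)‖ ≤ 2 := by
  have : ‖exp (-w)‖ ≤ 1 := by
    rw [norm_exp, neg_re]
    exact Real.exp_le_one_iff.mpr (by linarith)
  linarith [norm_sub_le (1 : ℂ) (exp (-w)), norm_one (α := ℂ)]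

theorem Complex.one_sub_exp_le_norm_one_add_exp_neg {w : ℂ} {c : ℝ} (hc : 0 < c)
    (hw : c * ‖w‖ ≤ w.re) : 1 - Real.exp (-(c * (π / 2))) ≤ ‖1 + exp (-w)‖ := by
  rcases le_or_gt (c * (π / 2)) w.re with hbig | hsmall
  · have : ‖exp (-w)‖ ≤ Real.exp (-(c * (π / 2))) := by
      rw [norm_exp, neg_re]
      exact Real.exp_le_exp.mpr (by linarith)
    have hsub : ‖(1 : ℂ)‖ - ‖-exp (-w)‖ ≤ ‖1 - -exp (-w)‖ := norm_sub_norm_le _ _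
    rw [norm_one, norm_neg, sub_neg_eq_add] at hsub
    linarith
  · have him : |w.im| < π / 2 := by
      have : c * |w.im| < c * (π / 2) := by
        linarith [mul_le_mul_of_nonneg_left (abs_im_le_norm w) hc.le]
      exact lt_of_mul_lt_mul_left this hc.le
    have hcos : 0 < Real.cos w.im := Real.cos_pos_of_mem_Ioo (abs_lt.mp him)
    calc 1 - Real.exp (-(c * (π / 2))) ≤ 1 + Real.exp (-w.re) * Real.cos w.im := by
          nlinarith [Real.exp_pos (-(c * (π / 2))), Real.exp_pos (-w.re)]
      _ = (1 + exp (-w)).re := by simp [exp_re]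
      _ ≤ ‖1 + exp (-w)‖ := re_le_norm _

theorem Complex.norm_one_sub_exp_div_mul_one_add_exp_le {s : ℂ} {c L : ℝ} (hc : 0 < c)
    (hL : 0 < L) (hs : c * ‖s‖ ≤ s.re) :
    ‖(1 - exp (-(L * s))) / (s * (1 + exp (-(L * s))))‖ ≤
      2 / ((1 - Real.exp (-(c * (π / 2)))) * ‖s‖) := by
  have hw : c * ‖(L : ℂ) * s‖ ≤ ((L : ℂ) * s).re := by
    rw [re_ofReal_mul, norm_mul, norm_real, Real.norm_of_nonneg hL.le]
    nlinarith
  have hm : 0 < 1 - Real.exp (-(c * (π / 2))) :=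
    sub_pos.mpr (Real.exp_lt_one_iff.mpr (by nlinarith [Real.pi_pos]))
  rcases eq_or_ne s 0 with rfl | hs₀
  · simp
  rw [norm_div, norm_mul, mul_comm ‖s‖]
  gcongr
  · exact norm_one_sub_exp_neg_le_two ((mul_nonneg hc.le (norm_nonneg _)).trans hw)
  · exact one_sub_exp_le_norm_one_add_exp_neg hc hw

theorem exists_bound_ratio (ε₀ ε₁ : ℝ) (h₀ : 0 < ε₀) (h₀₁ : ε₀ < ε₁)
    (h₁ : ε₁ < Real.pi / 2) (L : ℝ) (hL : 0 < L) :
    ∃ C : ℝ, 0 < C ∧ ∀ z μ : ℂ, z ≠ 0 → |Complex.arg z| < ε₀ →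
      (μ = 0 ∨ |Complex.arg μ| < Real.pi - ε₁) → z + μ ≠ 0 →
      ‖(1 - Complex.exp (-((L : ℂ) * (z + μ) ^ ((1 : ℂ) / 2)))) /
          ((z + μ) ^ ((1 : ℂ) / 2) *
            (1 + Complex.exp (-((L : ℂ) * (z + μ) ^ ((1 : ℂ) / 2)))))‖ ≤
        C / ‖z‖ ^ ((1 : ℝ) / 2) := by
  set c := Real.cos (1 / 2 * (π - ε₁))
  set m := 1 - Real.exp (-(c * (π / 2)))
  set k := Real.sin (ε₁ - ε₀)
  have hc : 0 < c := Real.cos_pos_of_mem_Ioo ⟨by linarith, by linarith⟩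
  have hm : 0 < m := sub_pos.mpr (Real.exp_lt_one_iff.mpr (by nlinarith [Real.pi_pos]))
  have hk : 0 < k := Real.sin_pos_of_pos_of_lt_pi (by linarith) (by linarith)
  refine ⟨2 / (m * k ^ ((1 : ℝ) / 2)), by positivity, fun z μ hz hz_arg hμ hzμ => ?_⟩
  have hμ_arg : |arg μ| ≤ π - ε₁ := by
    rcases hμ with rfl | hμ
    · rw [arg_zero, abs_zero]; linarith
    · exact hμ.le
  have hzμ_arg := abs_arg_add_le hz_arg.le hμ_arg h₀₁.le (h₀.trans h₀₁) h₁.le hzμ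
  have hzμ_norm := sin_sub_mul_norm_le_norm_add hz_arg.le hμ_arg h₀₁.le h₁.le
  rw [show (1 : ℂ) / 2 = ((1 / 2 : ℝ) : ℂ) by push_cast; rfl]
  have hs := cos_mul_norm_cpow_le_re (p := 1 / 2) (by norm_num) hzμ_arg (by linarith)
  refine (norm_one_sub_exp_div_mul_one_add_exp_le hc hL hs).trans ?_
  rw [norm_cpow_real, div_div, mul_assoc]
  gcongr
  rw [← Real.mul_rpow hk.le (norm_nonneg z)]
  exact Real.rpow_le_rpow (by positivity) hzμ_norm (by norm_num)
end
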